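/- arXiv:2011.10673 — 3 statements merged into one kernel-verified Lean document; each statement's English description precedes it below -/
import Mathlib

section
/- Let k, a ∈ ℝ and n ∈ ℕ, and regard D_{n,k} as a polynomial in ℝ[X]. Then the Dickson polynomial of the (k+1)-th kind satisfies the fourth-order differential equation (X² − 4a)²·D_{n,k}'''' + 10·X·(X² − 4a)·D_{n,k}''' + [(23 − 2n²)·X² + 8a·(n² − 4)]·D_{n,k}'' − 3·(2n² − 3)·X·D_{n,k}' + n²·(n² − 4)·D_{n,k} = 0, where ' denotes the formal polynomial derivative. -/
open Polynomial

/-- The Dickson polynomial of the `(k+1)`-th kind with real parameters `k, a`,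
as a polynomial in `ℝ[X]`, defined by the three-term recurrence. -/
noncomputable def dicksonP (k a : ℝ) : ℕ → Polynomial ℝ
  | 0 => C (2 - k)
  | 1 => X
  | n + 2 => X * dicksonP k a (n + 1) - C a * dicksonP k a n

lemma dicksonP_add_two (k a : ℝ) (n : ℕ) :
    dicksonP k a (n + 2) = X * dicksonP k a (n + 1) - C a * dicksonP k a n := rfl

lemma K1 (a : ℝ) : ∀ n : ℕ,
    ((X ^ 2 - C (4 * a)) * derivative (dicksonP 0 a n) =
      2 * C (n : ℝ) * dicksonP 0 a (n + 1) - C (n : ℝ) * X * dicksonP 0 a n) ∧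
    ((X ^ 2 - C (4 * a)) * derivative (dicksonP 0 a (n + 1)) =
      (2 * C (n : ℝ) + 2) * dicksonP 0 a (n + 2) -
        (C (n : ℝ) + 1) * X * dicksonP 0 a (n + 1))
  | 0 => by
    have d0 : dicksonP 0 a 0 = C (2 - 0) := rfl
    have d1 : dicksonP 0 a 1 = X := rfl
    have d2 : dicksonP 0 a 2 = X * dicksonP 0 a 1 - C a * dicksonP 0 a 0 := rfl
    constructor
    · rw [d0]; simp
    · rw [d1, d2, d0, d1]
      simp only [Nat.cast_zero, map_zero, derivative_X, map_mul, map_ofNat, map_sub]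
      ring
  | n + 1 => by
    obtain ⟨ih0, ih1⟩ := K1 a n
    have e2 : n + 1 + 1 = n + 2 := rfl
    have e3 : n + 1 + 2 = n + 3 := rfl
    have r2 : dicksonP 0 a (n + 2) = X * dicksonP 0 a (n + 1) - C a * dicksonP 0 a n := rfl
    have r3 : dicksonP 0 a (n + 3) = X * dicksonP 0 a (n + 2) - C a * dicksonP 0 a (n + 1) := rfl
    constructor
    · rw [e2]
      push_cast
      simp only [map_add, map_one]
      linear_combination ih1
    · rw [e2, e3, r3, r2]
      simp only [derivative_sub, derivative_mul, derivative_X, derivative_C, one_mul, zero_mul,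
        zero_sub, zero_add]
      push_cast
      simp only [map_add, map_one, map_mul, map_ofNat] at ih0 ih1 ⊢
      linear_combination X * ih1 - C a * ih0 + (2 * C (n : ℝ) + 2) * X * r2

lemma K2 (a : ℝ) : ∀ n : ℕ,
    ((X ^ 2 - C (4 * a)) * derivative (dicksonP 1 a n) =
      (2 * C (n : ℝ) + 2) * dicksonP 1 a (n + 1) - (C (n : ℝ) + 2) * X * dicksonP 1 a n) ∧
    ((X ^ 2 - C (4 * a)) * derivative (dicksonP 1 a (n + 1)) =
      (2 * C (n : ℝ) + 4) * dicksonP 1 a (n + 2) -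
        (C (n : ℝ) + 3) * X * dicksonP 1 a (n + 1))
  | 0 => by
    have d0 : dicksonP 1 a 0 = C (2 - 1) := rfl
    have d1 : dicksonP 1 a 1 = X := rfl
    have d2 : dicksonP 1 a 2 = X * dicksonP 1 a 1 - C a * dicksonP 1 a 0 := rfl
    constructor
    · rw [d0, d1]
      simp only [Nat.cast_zero, map_zero, derivative_C]
      norm_num
    · rw [d1, d2, d0, d1]
      simp only [Nat.cast_zero, map_zero, derivative_X, map_mul, map_ofNat, map_sub, map_one]
      ring
  | n + 1 => by
    obtain ⟨ih0, ih1⟩ := K2 a n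
    have e2 : n + 1 + 1 = n + 2 := rfl
    have e3 : n + 1 + 2 = n + 3 := rfl
    have r2 : dicksonP 1 a (n + 2) = X * dicksonP 1 a (n + 1) - C a * dicksonP 1 a n := rfl
    have r3 : dicksonP 1 a (n + 3) = X * dicksonP 1 a (n + 2) - C a * dicksonP 1 a (n + 1) := rfl
    constructor
    · rw [e2]
      push_cast
      simp only [map_add, map_one]
      linear_combination ih1
    · rw [e2, e3, r3, r2]
      simp only [derivative_sub, derivative_mul, derivative_X, derivative_C, one_mul, zero_mul,
        zero_sub, zero_add]
      push_cast
      simp only [map_add, map_one, map_mul, map_ofNat] at ih0 ih1 ⊢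
      linear_combination X * ih1 - C a * ih0 + (2 * C (n : ℝ) + 4) * X * r2

lemma Q_ne_zero' (a : ℝ) : (X ^ 2 - 4 * C a : Polynomial ℝ) ≠ 0 := fun h => by
  simpa using congrArg (fun p => Polynomial.coeff p 2) h

lemma ODE1 (a : ℝ) (n : ℕ) :
    (X ^ 2 - C (4 * a)) * derivative (derivative (dicksonP 0 a n)) +
      C 1 * X * derivative (dicksonP 0 a n) - C ((n : ℝ) ^ 2) * dicksonP 0 a n = 0 := by
  obtain ⟨k0, k1⟩ := K1 a n
  have r2 : dicksonP 0 a (n + 2) = X * dicksonP 0 a (n + 1) - C a * dicksonP 0 a n := rfl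
  have h := congrArg derivative k0
  simp only [derivative_mul, derivative_sub, derivative_add, derivative_pow, derivative_X,
    derivative_C, derivative_ofNat, derivative_natCast, Nat.cast_ofNat, map_mul, map_ofNat,
    map_pow, map_add, map_one] at h k0 k1 ⊢
  have key : (X ^ 2 - 4 * C a) *
      ((X ^ 2 - 4 * C a) * derivative (derivative (dicksonP 0 a n)) +
        X * derivative (dicksonP 0 a n) - C (n : ℝ) ^ 2 * dicksonP 0 a n) =
      (X ^ 2 - 4 * C a) * 0 := by
    rw [mul_zero]
    linear_combination (X ^ 2 - 4 * C a) * h + 2 * C (n : ℝ) * k1 -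
      (C (n : ℝ) + 1) * X * k0 + (4 * C (n : ℝ) ^ 2 + 4 * C (n : ℝ)) * r2
  have := mul_left_cancel₀ (Q_ne_zero' a) key
  linear_combination this

lemma ODE2 (a : ℝ) (n : ℕ) :
    (X ^ 2 - C (4 * a)) * derivative (derivative (dicksonP 1 a n)) +
      C 3 * X * derivative (dicksonP 1 a n) -
        C ((n : ℝ) ^ 2 + 2 * (n : ℝ)) * dicksonP 1 a n = 0 := by
  obtain ⟨k0, k1⟩ := K2 a n
  have r2 : dicksonP 1 a (n + 2) = X * dicksonP 1 a (n + 1) - C a * dicksonP 1 a n := rfl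
  have h := congrArg derivative k0
  simp only [derivative_mul, derivative_sub, derivative_add, derivative_pow, derivative_X,
    derivative_C, derivative_ofNat, derivative_natCast, Nat.cast_ofNat, map_mul, map_ofNat,
    map_pow, map_add, map_one] at h k0 k1 ⊢
  have key : (X ^ 2 - 4 * C a) *
      ((X ^ 2 - 4 * C a) * derivative (derivative (dicksonP 1 a n)) +
        3 * X * derivative (dicksonP 1 a n) -
          (C (n : ℝ) ^ 2 + 2 * C (n : ℝ)) * dicksonP 1 a n) =
      (X ^ 2 - 4 * C a) * 0 := by
    rw [mul_zero]
    linear_combination (X ^ 2 - 4 * C a) * h + (2 * C (n : ℝ) + 2) * k1 -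
      (C (n : ℝ) + 1) * X * k0 +
      ((2 * C (n : ℝ) + 2) * (2 * C (n : ℝ) + 4)) * r2
  have := mul_left_cancel₀ (Q_ne_zero' a) key
  linear_combination this

lemma stepD (a c l : ℝ) (y : Polynomial ℝ)
    (h : (X ^ 2 - C (4 * a)) * derivative (derivative y) + C c * X * derivative y -
      C l * y = 0) :
    (X ^ 2 - C (4 * a)) * derivative (derivative (derivative y)) +
      C (c + 2) * X * derivative (derivative y) - C (l - c) * derivative y = 0 := by
  have h' := congrArg derivative h
  simp only [derivative_add, derivative_sub, derivative_mul, derivative_pow, derivative_X,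
    derivative_C, derivative_ofNat, derivative_natCast, Nat.cast_ofNat, map_add, map_sub,
    map_mul, map_ofNat, map_one, map_zero] at h' ⊢
  linear_combination h'

lemma dicksonP_decomp (k a : ℝ) : ∀ n : ℕ,
    dicksonP k a n = C (1 - k) * dicksonP 0 a n + C k * dicksonP 1 a n ∧
    dicksonP k a (n + 1) = C (1 - k) * dicksonP 0 a (n + 1) + C k * dicksonP 1 a (n + 1)
  | 0 => by
    constructor
    · show C (2 - k) = C (1 - k) * C (2 - 0) + C k * C (2 - 1)
      norm_num
      simp only [map_sub, map_one, map_ofNat]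
      ring
    · show X = C (1 - k) * X + C k * X
      simp only [map_sub, map_one]
      ring
  | n + 1 => by
    obtain ⟨h0, h1⟩ := dicksonP_decomp k a n
    refine ⟨h1, ?_⟩
    show X * dicksonP k a (n + 1) - C a * dicksonP k a n = _
    rw [h0, h1]
    show _ = C (1 - k) * (X * dicksonP 0 a (n + 1) - C a * dicksonP 0 a n) +
      C k * (X * dicksonP 1 a (n + 1) - C a * dicksonP 1 a n)
    ring

theorem dickson_fourth_order_ODE (k a : ℝ) (n : ℕ) :
    (X ^ 2 - C (4 * a)) ^ 2 *
      derivative (derivative (derivative (derivative (dicksonP k a n)))) +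
    C 10 * X * (X ^ 2 - C (4 * a)) *
      derivative (derivative (derivative (dicksonP k a n))) +
    (C (23 - 2 * (n : ℝ) ^ 2) * X ^ 2 + C (8 * a * ((n : ℝ) ^ 2 - 4))) *
      derivative (derivative (dicksonP k a n)) -
    C (3 * (2 * (n : ℝ) ^ 2 - 3)) * X * derivative (dicksonP k a n) +
    C ((n : ℝ) ^ 2 * ((n : ℝ) ^ 2 - 4)) * dicksonP k a n = 0 := by
  have hD0 := ODE1 a n
  have hD1 := stepD a 1 ((n : ℝ) ^ 2) _ hD0
  have hD2 := stepD a (1 + 2) ((n : ℝ) ^ 2 - 1) _ hD1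
  have hE0 := ODE2 a n
  have hE1 := stepD a 3 ((n : ℝ) ^ 2 + 2 * (n : ℝ)) _ hE0
  have hE2 := stepD a (3 + 2) ((n : ℝ) ^ 2 + 2 * (n : ℝ) - 3) _ hE1
  rw [(dicksonP_decomp k a n).1]
  simp only [derivative_add, derivative_C_mul]
  simp only [map_sub, map_add, map_mul, map_pow, map_one, map_ofNat] at hD0 hD1 hD2 hE0 hE1 hE2 ⊢
  linear_combination (1 - C k) * ((X ^ 2 - 4 * C a) * hD2 + 5 * X * hD1 +
      (4 - C (n : ℝ) ^ 2) * hD0) +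
    C k * ((X ^ 2 - 4 * C a) * hE2 + 3 * X * hE1 +
      (2 * C (n : ℝ) - C (n : ℝ) ^ 2) * hE0)
end

section
/- For every z ∈ ℂ \ [−1, 1], the Stieltjes transform of the Chebyshev weight of the second kind satisfies (2/π) · ∫_{−1}^{1} √(1 − x²)/(z − x) dx = 2z·(1 − √(1 − z⁻²)), where √ denotes the principal complex square root. -/
/-!
Write `z = (q + q⁻¹) / 2` with `‖q‖ < 1`, so that the right-hand side is `2 q`. After the
substitution `x = cos θ`, the identity `1 - 2 q cos θ + q² = 2 q (z - cos θ)` splits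
`sin² θ / (z - cos θ)` into `z + cos θ` minus `(q⁻¹ - q) / 2` times the Poisson kernel
`(1 - q²) / (1 - 2 q cos θ + q²)`, whose integral over `[0, π]` is `π`: a primitive is
`θ + i (log (1 - q e^{iθ}) - log (1 - q e^{-iθ}))`, and the arguments of the logarithms stay in the
disc of radius `‖q‖ < 1` about `1`, away from the branch cut. The integral is therefore
`π (z - (q⁻¹ - q) / 2) = π q`. The principal root gives `q = z (1 - √(1 - z⁻²))`, with
`‖q‖ ≤ ‖q⁻¹‖` because the root has nonnegative real part, and `‖q‖ = 1` would force
`z = Re q ∈ [-1, 1]`.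
-/

open Real Set intervalIntegral

theorem integral_neg_one_one_eq_integral_sin_smul_comp_cos {E : Type*} [NormedAddCommGroup E]
    [NormedSpace ℝ E] (g : ℝ → E) :
    ∫ x in (-1 : ℝ)..1, g x = ∫ θ in (0 : ℝ)..π, sin θ • g (cos θ) := by
  have h := integral_deriv_smul_comp_of_deriv_nonpos (g := g) (a := 0) (b := π)
    continuous_cos.continuousOn (fun θ _ => hasDerivAt_cos θ)
    (fun θ hθ => by
      rw [min_eq_left pi_pos.le, max_eq_right pi_pos.le] at hθ
      exact neg_nonpos.mpr (sin_nonneg_of_nonneg_of_le_pi hθ.1.le hθ.2.le))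
  simp only [Function.comp_apply, neg_smul, integral_neg, cos_zero, cos_pi] at h
  rw [integral_symm, ← h, neg_neg]

namespace Complex

theorem one_sub_mem_slitPlane_of_norm_lt_one {w : ℂ} (hw : ‖w‖ < 1) : 1 - w ∈ slitPlane := by
  simpa [sub_eq_add_neg] using mem_slitPlane_of_norm_lt_one (z := -w) (by simpa using hw)

theorem one_sub_two_mul_cos_add_sq (q : ℂ) (θ : ℂ) :
    1 - 2 * q * cos θ + q ^ 2 = (1 - q * exp (θ * I)) * (1 - q * exp (-θ * I)) := by
  have h : exp (θ * I) * exp (-θ * I) = 1 := by rw [← exp_add]; simp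
  linear_combination (-q) * two_cos θ - q ^ 2 * h

theorem one_sub_mul_exp_mem_slitPlane {q : ℂ} (hq : ‖q‖ < 1) (θ : ℝ) :
    1 - q * exp (θ * I) ∈ slitPlane :=
  one_sub_mem_slitPlane_of_norm_lt_one (by rwa [norm_mul, norm_exp_ofReal_mul_I, mul_one])

theorem one_sub_two_mul_cos_add_sq_ne_zero {q : ℂ} (hq : ‖q‖ < 1) (θ : ℝ) :
    1 - 2 * q * cos θ + q ^ 2 ≠ 0 := by
  rw [one_sub_two_mul_cos_add_sq, ← ofReal_neg]
  exact mul_ne_zero (slitPlane_ne_zero (one_sub_mul_exp_mem_slitPlane hq θ))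
    (slitPlane_ne_zero (one_sub_mul_exp_mem_slitPlane hq (-θ)))

noncomputable def poissonPrimitive (q : ℂ) (θ : ℝ) : ℂ :=
  θ + I * (log (1 - q * exp (θ * I)) - log (1 - q * exp (-θ * I)))

theorem hasDerivAt_poissonPrimitive {q : ℂ} (hq : ‖q‖ < 1) (θ : ℝ) :
    HasDerivAt (poissonPrimitive q) ((1 - q ^ 2) / (1 - 2 * q * cos θ + q ^ 2)) θ := by
  have hexp (s : ℂ) : HasDerivAt (fun t : ℝ => exp (s * t * I)) (s * I * exp (s * θ * I)) θ := by
    simpa [mul_comm, mul_left_comm, mul_assoc] using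
      (((hasDerivAt_id (θ : ℂ)).const_mul s).mul_const I).cexp.comp_ofReal
  have hlog (s : ℝ) := ((hexp s).const_mul q |>.const_sub 1).clog_real
    (by simpa [mul_assoc] using one_sub_mul_exp_mem_slitPlane hq (s * θ))
  have hF : poissonPrimitive q = fun t : ℝ => (t : ℂ) +
      I * (log (1 - q * exp ((1 : ℝ) * t * I)) - log (1 - q * exp ((-1 : ℝ) * t * I))) := by
    funext t; simp [poissonPrimitive]
  have hE : exp (θ * I) * exp (-θ * I) = 1 := by rw [← exp_add]; simp
  have hne := slitPlane_ne_zero (one_sub_mul_exp_mem_slitPlane hq θ)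
  have hne' := slitPlane_ne_zero (one_sub_mul_exp_mem_slitPlane hq (-θ))
  rw [hF]
  refine ((hasDerivAt_id (θ : ℂ)).comp_ofReal.add
    (((hlog 1).sub (hlog (-1))).const_mul I)).congr_deriv ?_
  push_cast at hne' ⊢
  rw [one_sub_two_mul_cos_add_sq]
  simp only [one_mul, neg_mul] at hne' hE ⊢
  generalize exp (θ * I) = E at *
  generalize exp (-(θ * I)) = E' at *
  field_simp
  linear_combination (-q ^ 2) * hE + (2 * q ^ 2 * E * E' - q * E - q * E') * I_sq

theorem poissonPrimitive_zero (q : ℂ) : poissonPrimitive q 0 = 0 := by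
  simp [poissonPrimitive]

theorem poissonPrimitive_pi (q : ℂ) : poissonPrimitive q π = π := by
  simp [poissonPrimitive, exp_pi_mul_I, neg_mul, exp_neg]

theorem joukowski_sub_cos_ne_zero {q : ℂ} (hq : ‖q‖ < 1) (hq0 : q ≠ 0) (θ : ℝ) :
    (q + q⁻¹) / 2 - cos θ ≠ 0 := by
  have h := one_sub_two_mul_cos_add_sq_ne_zero hq θ
  contrapose! h
  field_simp at h
  linear_combination h

theorem integral_sin_sq_div_joukowski_sub_cos {q : ℂ} (hq : ‖q‖ < 1) (hq0 : q ≠ 0) :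
    ∫ θ in (0 : ℝ)..π, sin θ ^ 2 / ((q + q⁻¹) / 2 - cos θ) = π * q := by
  set z := (q + q⁻¹) / 2
  set c := (q⁻¹ - q) / 2
  have hderiv (θ : ℝ) : HasDerivAt (fun t : ℝ => z * t + sin t - c * poissonPrimitive q t)
      (sin θ ^ 2 / (z - cos θ)) θ := by
    have h := ((((hasDerivAt_id (θ : ℂ)).const_mul z).add
      (hasDerivAt_sin (θ : ℂ))).comp_ofReal).sub ((hasDerivAt_poissonPrimitive hq θ).const_mul c)
    refine h.congr_deriv ?_
    have hD : 1 - q * 2 * cos θ + q ^ 2 ≠ 0 := by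
      rw [mul_comm q 2]; exact one_sub_two_mul_cos_add_sq_ne_zero hq θ
    have hzD : z - cos θ = (1 - q * 2 * cos θ + q ^ 2) / (2 * q) := by
      simp only [z]; field_simp; ring
    rw [hzD]
    simp only [z, c]
    field_simp
    linear_combination (-4 * q ^ 2) * sin_sq_add_cos_sq (θ : ℂ)
  have hcont : Continuous fun θ : ℝ => sin θ ^ 2 / (z - cos θ) :=
    (by fun_prop : Continuous fun θ : ℝ => sin θ ^ 2).div (by fun_prop)
      (joukowski_sub_cos_ne_zero hq hq0)
  rw [integral_eq_sub_of_hasDerivAt (fun θ _ => hderiv θ)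
    (hcont.intervalIntegrable _ _)]
  simp only [poissonPrimitive_zero, poissonPrimitive_pi, z, c]
  push_cast
  rw [sin_pi, sin_zero]
  field_simp
  ring

theorem norm_one_sub_le_norm_one_add {u : ℂ} (hu : 0 ≤ u.re) : ‖1 - u‖ ≤ ‖1 + u‖ := by
  refine (sq_le_sq₀ (norm_nonneg _) (norm_nonneg _)).1 ?_
  simp only [Complex.sq_norm, normSq_apply, sub_re, add_re, sub_im, add_im, one_re, one_im]
  nlinarith

theorem norm_lt_one_of_mul_eq_one {q q' : ℂ} (h : q * q' = 1) (hle : ‖q‖ ≤ ‖q'‖)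
    (hq : (q + q') / 2 ∉ (fun x : ℝ => (x : ℂ)) '' Set.Icc (-1) 1) : ‖q‖ < 1 := by
  have hnorm : ‖q‖ * ‖q'‖ = 1 := by rw [← norm_mul, h, norm_one]
  have hle1 : ‖q‖ ≤ 1 := by nlinarith [norm_nonneg q]
  refine hle1.lt_of_ne fun h1 => hq ⟨q.re, abs_le.1 ((abs_re_le_norm q).trans h1.le), ?_⟩
  have hconj : q * starRingEnd ℂ q = 1 := by rw [mul_conj, normSq_eq_norm_sq, h1]; norm_num
  rw [show ((fun x : ℝ => (x : ℂ)) q.re) = _ from re_eq_add_conj q,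
    mul_left_cancel₀ (left_ne_zero_of_mul_eq_one h) (hconj.trans h.symm)]

noncomputable def joukowskiInv (z : ℂ) : ℂ := z * (1 - (1 - 1 / z ^ 2) ^ ((1 : ℂ) / 2))

theorem joukowskiInv_mul_eq_one {z : ℂ} (hz : z ≠ 0) :
    joukowskiInv z * (z * (1 + (1 - 1 / z ^ 2) ^ ((1 : ℂ) / 2))) = 1 := by
  have hu : ((1 - 1 / z ^ 2) ^ ((1 : ℂ) / 2)) ^ 2 = 1 - 1 / z ^ 2 := by
    rw [one_div (2 : ℂ)]; exact cpow_ofNat_inv_pow _ 2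
  have hz2 : z ^ 2 * (1 / z ^ 2) = 1 := by field_simp
  rw [joukowskiInv]
  linear_combination (-z ^ 2) * hu + hz2

theorem joukowskiInv_ne_zero {z : ℂ} (hz : z ≠ 0) : joukowskiInv z ≠ 0 :=
  left_ne_zero_of_mul_eq_one (joukowskiInv_mul_eq_one hz)

theorem joukowski_joukowskiInv {z : ℂ} (hz : z ≠ 0) :
    (joukowskiInv z + (joukowskiInv z)⁻¹) / 2 = z := by
  rw [inv_eq_of_mul_eq_one_right (joukowskiInv_mul_eq_one hz), joukowskiInv]
  ring

theorem norm_joukowskiInv_lt_one {z : ℂ} (hz : z ∉ (fun x : ℝ => (x : ℂ)) '' Set.Icc (-1) 1) :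
    ‖joukowskiInv z‖ < 1 := by
  have hz0 : z ≠ 0 := by rintro rfl; exact hz ⟨0, by norm_num, by simp⟩
  refine norm_lt_one_of_mul_eq_one (joukowskiInv_mul_eq_one hz0) ?_ ?_
  · rw [joukowskiInv, norm_mul, norm_mul]
    gcongr
    refine norm_one_sub_le_norm_one_add ?_
    rw [one_div (2 : ℂ), cpow_inv_two_re]
    exact Real.sqrt_nonneg _
  · rwa [joukowskiInv, show (z * (1 - (1 - 1 / z ^ 2) ^ ((1 : ℂ) / 2)) +
      z * (1 + (1 - 1 / z ^ 2) ^ ((1 : ℂ) / 2))) / 2 = z by ring]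

theorem integral_sqrt_one_sub_sq_div_joukowski_sub {q : ℂ} (hq : ‖q‖ < 1) (hq0 : q ≠ 0) :
    ∫ x in (-1 : ℝ)..1, (√(1 - x ^ 2) : ℂ) / ((q + q⁻¹) / 2 - x) = π * q := by
  rw [integral_neg_one_one_eq_integral_sin_smul_comp_cos,
    ← integral_sin_sq_div_joukowski_sub_cos hq hq0]
  refine integral_congr fun θ hθ => ?_
  rw [uIcc_of_le pi_pos.le] at hθ
  rw [← sin_eq_sqrt_one_sub_cos_sq hθ.1 hθ.2, real_smul, ← mul_div_assoc]
  push_cast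
  ring

end Complex

theorem chebyshev_weight_stieltjes_transform (z : ℂ)
    (hz : z ∉ (fun x : ℝ => (x : ℂ)) '' Set.Icc (-1 : ℝ) 1) :
    (2 / Real.pi : ℂ) * ∫ x in (-1 : ℝ)..1, (Real.sqrt (1 - x ^ 2) : ℂ) / (z - x) =
      2 * z * (1 - (1 - 1 / z ^ 2) ^ ((1 : ℂ) / 2)) := by
  have hz0 : z ≠ 0 := by rintro rfl; exact hz ⟨0, by norm_num, by simp⟩
  have hπ : (π : ℂ) ≠ 0 := Complex.ofReal_ne_zero.mpr pi_ne_zero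
  conv_lhs => rw [← Complex.joukowski_joukowskiInv hz0]
  rw [Complex.integral_sqrt_one_sub_sq_div_joukowski_sub (Complex.norm_joukowskiInv_lt_one hz)
    (Complex.joukowskiInv_ne_zero hz0), Complex.joukowskiInv]
  field_simp
end

section
/- Let k ∈ ℝ with k ∉ {1, 2}, let a > 0, and set Ω(k) = √a · ((k−2)/√(k−1)) · i ∈ ℂ, where √(k−1) is the principal complex square root. Then for all natural numbers n, m: k · (D_{n,k}(Ω;a)·D_{m,k}(Ω;a) + D_{n,k}(−Ω;a)·D_{m,k}(−Ω;a)) / (2·(k−1)·(2−k)) = ((2−k)·k/(k−1)) · ((1 + (−1)^{n+m})/2) · (i·√(a/(k−1)))^{n+m}, where √(a/(k−1)) is the principal complex square root. -/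
/-!
Write `Ω = (k - 2) c` with `c = √a / √(k - 1) · i`, so that `c² (k - 1) = -a`. On that curve the
Dickson recurrence has the closed form `D_n((k - 2) x) = (2 - k) (-x)ⁿ`, hence the symmetrised product
equals `(2 - k)² (1 + (-1)^(n+m)) c^(n+m)`. This vanishes for odd `n + m` and for even `n + m` only
depends on `c²`, which is also the square of `i √(a / (k - 1))`.
-/

/-- The Dickson polynomial of the `(k+1)`-th kind with real parameters `k, a`,
evaluated at a complex argument, defined by the three-term recurrence. -/
noncomputable def dicksonC (k a : ℝ) : ℕ → ℂ → ℂ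
  | 0, _ => 2 - k
  | 1, x => x
  | n + 2, x => x * dicksonC k a (n + 1) x - a * dicksonC k a n x

/-- `-x` is a root of the characteristic polynomial `t² - (k - 2) x t + a` of the recurrence, and the
initial values `2 - k`, `(k - 2) x` already lie on the geometric sequence `(2 - k) (-x)ⁿ`. -/
theorem dicksonC_sub_two_mul {k a : ℝ} {x : ℂ} (hx : x ^ 2 * ((k : ℂ) - 1) = -a) :
    ∀ n, dicksonC k a n (((k : ℂ) - 2) * x) = (2 - (k : ℂ)) * (-x) ^ n
  | 0 => by simp [dicksonC]
  | 1 => by rw [dicksonC]; ring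
  | n + 2 => by
      rw [dicksonC, dicksonC_sub_two_mul hx (n + 1), dicksonC_sub_two_mul hx n]
      linear_combination (-(2 - (k : ℂ)) * (-x) ^ n) * hx

theorem one_add_neg_one_pow_mul_pow_eq_of_sq_eq {R : Type*} [CommRing R] {b c : R}
    (h : b ^ 2 = c ^ 2) (N : ℕ) : (1 + (-1) ^ N) * b ^ N = (1 + (-1) ^ N) * c ^ N := by
  rcases Nat.even_or_odd' N with ⟨t, rfl | rfl⟩
  · rw [pow_mul b, pow_mul c, h]
  · simp [pow_succ, pow_mul]

theorem neg_pow_mul_neg_pow_add_pow_mul_pow {R : Type*} [CommRing R] (x : R) (n m : ℕ) :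
    (-x) ^ n * (-x) ^ m + x ^ n * x ^ m = (1 + (-1) ^ (n + m)) * x ^ (n + m) := by
  rw [← pow_add, ← pow_add, neg_pow]; ring

theorem Complex.cpow_one_div_two_sq (z : ℂ) : (z ^ ((1 : ℂ) / 2)) ^ 2 = z := by
  rw [one_div]; exact cpow_ofNat_inv_pow z 2

theorem dickson_discrete_part (k a : ℝ) (hk1 : k ≠ 1) (hk2 : k ≠ 2) (ha : 0 < a)
    (n m : ℕ) :
    (k : ℂ) *
        (dicksonC k a n ((Real.sqrt a : ℂ) * (((k : ℂ) - 2) / ((k : ℂ) - 1) ^ ((1 : ℂ) / 2)) *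
              Complex.I) *
          dicksonC k a m ((Real.sqrt a : ℂ) * (((k : ℂ) - 2) / ((k : ℂ) - 1) ^ ((1 : ℂ) / 2)) *
              Complex.I) +
        dicksonC k a n (-((Real.sqrt a : ℂ) * (((k : ℂ) - 2) / ((k : ℂ) - 1) ^ ((1 : ℂ) / 2)) *
              Complex.I)) *
          dicksonC k a m (-((Real.sqrt a : ℂ) * (((k : ℂ) - 2) / ((k : ℂ) - 1) ^ ((1 : ℂ) / 2)) *
              Complex.I))) /
        (2 * ((k : ℂ) - 1) * (2 - (k : ℂ))) =
      ((2 - (k : ℂ)) * k / ((k : ℂ) - 1)) * ((1 + (-1 : ℂ) ^ (n + m)) / 2) *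
        (Complex.I * ((a : ℂ) / ((k : ℂ) - 1)) ^ ((1 : ℂ) / 2)) ^ (n + m) := by
  have hk1' : (k : ℂ) - 1 ≠ 0 := sub_ne_zero.mpr (mod_cast hk1)
  have hk2' : (2 : ℂ) - k ≠ 0 := sub_ne_zero.mpr (mod_cast hk2.symm)
  have hc : (Real.sqrt a / ((k : ℂ) - 1) ^ ((1 : ℂ) / 2) * Complex.I) ^ 2 = -a / ((k : ℂ) - 1) := by
    rw [div_mul_eq_mul_div, div_pow, mul_pow, Complex.cpow_one_div_two_sq, Complex.I_sq,
      ← Complex.ofReal_pow, Real.sq_sqrt ha.le]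
    ring
  have hb : (Complex.I * ((a : ℂ) / ((k : ℂ) - 1)) ^ ((1 : ℂ) / 2)) ^ 2 = -a / ((k : ℂ) - 1) := by
    rw [mul_pow, Complex.cpow_one_div_two_sq, Complex.I_sq]
    ring
  set c : ℂ := Real.sqrt a / ((k : ℂ) - 1) ^ ((1 : ℂ) / 2) * Complex.I
  set b : ℂ := Complex.I * ((a : ℂ) / ((k : ℂ) - 1)) ^ ((1 : ℂ) / 2)
  have hcurve : c ^ 2 * ((k : ℂ) - 1) = -a := by rw [hc]; field_simp
  have hcurve_neg : (-c) ^ 2 * ((k : ℂ) - 1) = -a := by rwa [neg_sq]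
  have hΩ : (Real.sqrt a : ℂ) * (((k : ℂ) - 2) / ((k : ℂ) - 1) ^ ((1 : ℂ) / 2)) * Complex.I
      = ((k : ℂ) - 2) * c := by ring
  rw [hΩ, ← mul_neg, dicksonC_sub_two_mul hcurve, dicksonC_sub_two_mul hcurve,
    dicksonC_sub_two_mul hcurve_neg, dicksonC_sub_two_mul hcurve_neg, neg_neg]
  clear_value c b
  field_simp
  linear_combination (k : ℂ) * (neg_pow_mul_neg_pow_add_pow_mul_pow c n m -
    one_add_neg_one_pow_mul_pow_eq_of_sq_eq (hb.trans hc.symm) (n + m))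
end
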